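/- If an instruction I and a transition label μ mention disjoint sets of process names, then the delay rule commutes with substitution of stores on the processes of I: a delayed step from ⟨I; C, Σ⟩ to ⟨I; C', Σ'⟩ leaves the local stores of all processes in pn(I) unchanged, i.e., Σ' p = Σ p for every p ∈ pn(I). -/
import Mathlib


inductive Expr (FName Var Val : Type) where
  | const (v : Val)
  | var (x : Var)
  | app (f : FName) (args : List (Expr FName Var Val))

variable {FName Var Val PName SLbl : Type}

/-- Evaluation of expressions with fixed interpretations of function symbols. -/
def Expr.eval (F : FName → List Val → Val) (σ : Var → Val) : Expr FName Var Val → Val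
  | .const v => v
  | .var x => σ x
  | .app f es => F f (es.attach.map (fun e => e.1.eval F σ))
decreasing_by have := List.sizeOf_lt_of_mem e.2; simp_wf; omega

mutual
/-- Instructions: assignment, communication, selection, conditional. -/
inductive Instr (PName FName Var Val SLbl : Type) where
  | assign (p : PName) (x : Var) (e : Expr FName Var Val)
  | com (p : PName) (e : Expr FName Var Val) (q : PName) (x : Var)
  | sel (p q : PName) (l : SLbl)
  | cond (p : PName) (e : Expr FName Var Val)
      (C₁ C₂ : Chor PName FName Var Val SLbl)
/-- Choreographies: terminated, or instruction sequencing. -/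
inductive Chor (PName FName Var Val SLbl : Type) where
  | nil
  | seq (I : Instr PName FName Var Val SLbl) (C : Chor PName FName Var Val SLbl)
end

mutual
/-- Process names occurring in an instruction. -/
def Instr.pn : Instr PName FName Var Val SLbl → Set PName
  | .assign p _ _ => {p}
  | .com p _ q _ => {p, q}
  | .sel p q _ => {p, q}
  | .cond p _ C₁ C₂ => {p} ∪ C₁.pn ∪ C₂.pn
/-- Process names occurring in a choreography. -/
def Chor.pn : Chor PName FName Var Val SLbl → Set PName
  | .nil => ∅
  | .seq I C => I.pn ∪ C.pn
end

/-- Continuation grafting. -/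
def Chor.graft : Chor PName FName Var Val SLbl → Chor PName FName Var Val SLbl →
    Chor PName FName Var Val SLbl
  | .nil, C => C
  | .seq I C', C => .seq I (C'.graft C)

/-- Transition labels. -/
inductive TLabel (PName Val SLbl : Type) where
  | tau (p : PName)
  | com (p : PName) (v : Val) (q : PName)
  | sel (p q : PName) (l : SLbl)
  | thenL (p : PName)
  | elseL (p : PName)

/-- Process names occurring in a transition label. -/
def TLabel.pn : TLabel PName Val SLbl → Set PName
  | .tau p => {p}
  | .com p _ q => {p, q}
  | .sel p q _ => {p, q}
  | .thenL p => {p}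
  | .elseL p => {p}

/-- Choreographic stores. -/
def CStore (PName Var Val : Type) := PName → Var → Val

variable [DecidableEq PName] [DecidableEq Var]

/-- Store update. -/
def CStore.upd (S : CStore PName Var Val) (p : PName) (x : Var) (v : Val) :
    CStore PName Var Val :=
  fun q => if q = p then Function.update (S p) x v else S q

/-- Labelled small-step semantics, including the delay rules. -/
inductive Step (F : FName → List Val → Val) (tt : Val) :
    Chor PName FName Var Val SLbl → CStore PName Var Val →
    TLabel PName Val SLbl →
    Chor PName FName Var Val SLbl → CStore PName Var Val → Prop where
  | loc {p x e C S} :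
      Step F tt (.seq (.assign p x e) C) S (.tau p) C (S.upd p x (e.eval F (S p)))
  | com {p e q x C S} :
      Step F tt (.seq (.com p e q x) C) S (.com p (e.eval F (S p)) q)
        C (S.upd q x (e.eval F (S p)))
  | sel {p q l C S} :
      Step F tt (.seq (.sel p q l) C) S (.sel p q l) C S
  | cond_then {p e C₁ C₂ C S} :
      e.eval F (S p) = tt →
      Step F tt (.seq (.cond p e C₁ C₂) C) S (.thenL p) (C₁.graft C) S
  | cond_else {p e C₁ C₂ C S} :
      e.eval F (S p) ≠ tt →
      Step F tt (.seq (.cond p e C₁ C₂) C) S (.elseL p) (C₂.graft C) S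
  | delay {I C S μ C' S'} :
      Step F tt C S μ C' S' → I.pn ∩ μ.pn = ∅ →
      Step F tt (.seq I C) S μ (.seq I C') S'
  | delay_cond {p e C₁ C₂ C S μ C₁' C₂' S'} :
      Step F tt C₁ S μ C₁' S' → Step F tt C₂ S μ C₂' S' → p ∉ μ.pn →
      Step F tt (.seq (.cond p e C₁ C₂) C) S μ (.seq (.cond p e C₁' C₂') C) S'

theorem step_stores_eq {F : FName → List Val → Val} {tt : Val}
    {C C' : Chor PName FName Var Val SLbl} {S S' : CStore PName Var Val}
    {μ : TLabel PName Val SLbl}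
    (hstep : Step F tt C S μ C' S') : ∀ p ∉ μ.pn, S' p = S p := by
  induction hstep with
  | loc => intro q hq; simp [TLabel.pn] at hq; simp [CStore.upd, hq]
  | com => intro r hr; simp [TLabel.pn] at hr; simp [CStore.upd, hr.2]
  | sel => intros; rfl
  | cond_then => intros; rfl
  | cond_else => intros; rfl
  | delay _ _ ih => exact ih
  | delay_cond _ _ _ ih => exact ih

/-- A delayed step past an instruction `I` whose process names are disjoint
    from those of the label leaves the local stores of all processes of `I`
    unchanged. -/
theorem delay_preserves_stores (F : FName → List Val → Val) (tt : Val)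
    (I : Instr PName FName Var Val SLbl) (C C' : Chor PName FName Var Val SLbl)
    (S S' : CStore PName Var Val) (μ : TLabel PName Val SLbl)
    (hdisj : I.pn ∩ μ.pn = ∅)
    (hstep : Step F tt (.seq I C) S μ (.seq I C') S') :
    ∀ p ∈ I.pn, S' p = S p := by
  intro p hp
  apply step_stores_eq hstep
  intro hμ
  exact Set.eq_empty_iff_forall_notMem.mp hdisj p ⟨hp, hμ⟩
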